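/- arXiv:2107.01752 — 7 statements merged into one kernel-verified Lean document; each statement's English description precedes it below -/
import Mathlib

section
/- For every vertex v ∈ {1,…,N}, the language-semiring DP recurrence fᴳ₁ = {[]} (the language containing only the empty list) and fᴳ_v = ⋃_{v' ∈ P(v)} fᴳ_{v'} ∘ {[(v',v)]} evaluates to exactly the set of paths to v: fᴳ_v = { [ (v₀,v₁), (v₁,v₂), …, (v_{k−1},v_k) ] : v₀ = 1, v_k = v, and v_{i−1} ∈ P(v_i) for all 1 ≤ i ≤ k }. -/
/-- Cross-join of two languages: `x ∘ y = { ℓ ++ ℓ' : ℓ ∈ x, ℓ' ∈ y }`. -/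
def crossJoin {E : Type*} (x y : Set (List E)) : Set (List E) :=
  Set.image2 (· ++ ·) x y

/-- `IsPathTo P v l` : the edge list `l = [(v₀,v₁),…,(v_{k−1},v_k)]` is a path in the DAG
with parent function `P`, starting at `v₀ = 1`, ending at `v_k = v`, with
`v_{i−1} ∈ P (v_i)` for all `i`. -/
inductive IsPathTo (P : ℕ → Finset ℕ) : ℕ → List (ℕ × ℕ) → Prop
  | nil : IsPathTo P 1 []
  | cons {v' v : ℕ} {l : List (ℕ × ℕ)} :
      IsPathTo P v' l → v' ∈ P v → IsPathTo P v (l ++ [(v', v)])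

/-
The sets of paths satisfy the DP recurrence themselves; since `P` lowers vertices, the
recurrence has a unique solution on `{1,…,N}`, by strong induction on `v`.
-/

theorem mem_crossJoin_singleton {E : Type*} {x : Set (List E)} {m l : List E} :
    l ∈ crossJoin x {m} ↔ ∃ l' ∈ x, l' ++ m = l := by
  simp [crossJoin]

theorem isPathTo_iff {P : ℕ → Finset ℕ} {v : ℕ} {l : List (ℕ × ℕ)} :
    IsPathTo P v l ↔
      (v = 1 ∧ l = []) ∨ ∃ v' ∈ P v, ∃ l', IsPathTo P v' l' ∧ l' ++ [(v', v)] = l := by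
  constructor
  · rintro (_ | @⟨v', _, l', hl', hv'⟩)
    · exact .inl ⟨rfl, rfl⟩
    · exact .inr ⟨v', hv', l', hl', rfl⟩
  · rintro (⟨rfl, rfl⟩ | ⟨v', hv', l', hl', rfl⟩)
    · exact .nil
    · exact .cons hl' hv'

theorem setOf_isPathTo_one {P : ℕ → Finset ℕ} (hP1 : P 1 = ∅) :
    {l | IsPathTo P 1 l} = {[]} := by
  ext l
  rw [Set.mem_ofPred_eq, isPathTo_iff]
  simp [hP1]

theorem setOf_isPathTo_of_ne_one {P : ℕ → Finset ℕ} {v : ℕ} (hv : v ≠ 1) :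
    {l | IsPathTo P v l} = ⋃ v' ∈ P v, crossJoin {l | IsPathTo P v' l} {[(v', v)]} := by
  ext l
  rw [Set.mem_ofPred_eq, isPathTo_iff]
  simp only [Set.mem_iUnion, mem_crossJoin_singleton, Set.mem_ofPred_eq, exists_prop, hv,
    false_and, false_or]

theorem stmt_0_general (N : ℕ) (P : ℕ → Finset ℕ)
    (hP : ∀ v, v ≤ N → ∀ v' ∈ P v, 1 ≤ v' ∧ v' < v)
    (hP1 : P 1 = ∅)
    (fG : ℕ → Set (List (ℕ × ℕ)))
    (h1 : fG 1 = {[]})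
    (hrec : ∀ v, 2 ≤ v → v ≤ N →
      fG v = ⋃ v' ∈ P v, crossJoin (fG v') {[(v', v)]}) :
    ∀ v, 1 ≤ v → v ≤ N → fG v = {l | IsPathTo P v l} := by
  intro v
  induction v using Nat.strong_induction_on with
  | _ v ih =>
    intro hv1 hvN
    obtain rfl | hv2 := eq_or_lt_of_le hv1
    · rw [h1, setOf_isPathTo_one hP1]
    · rw [hrec v hv2 hvN, setOf_isPathTo_of_ne_one hv2.ne']
      refine Set.iUnion₂_congr fun v' hv' => ?_
      obtain ⟨hv'1, hv'v⟩ := hP v hvN v' hv'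
      rw [ih v' hv'v hv'1 (hv'v.le.trans hvN)]

/-- The language-semiring DP recurrence generates exactly the set of paths to each vertex. -/
theorem stmt_0 (N : ℕ) (hN : 1 ≤ N) (P : ℕ → Finset ℕ)
    (hP : ∀ v, v ≤ N → ∀ v' ∈ P v, 1 ≤ v' ∧ v' < v)
    (hP1 : P 1 = ∅)
    (fG : ℕ → Set (List (ℕ × ℕ)))
    (h1 : fG 1 = {[]})
    (hrec : ∀ v, 2 ≤ v → v ≤ N →
      fG v = ⋃ v' ∈ P v, crossJoin (fG v') {[(v', v)]}) :
    ∀ v, 1 ≤ v → v ≤ N → fG v = {l | IsPathTo P v l} :=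
  stmt_0_general N P hP hP1 fG h1 hrec
end

section
/- (DP semiring fusion, DAG instance.) Let S be a semiring, w : E → S, and let g be a semiring homomorphism from the language semiring over E to S satisfying g({[e]}) = w(e) for every edge e ∈ E. Define fᴳ by fᴳ₁ = {[]}, fᴳ_v = ⋃_{v' ∈ P(v)} fᴳ_{v'} ∘ {[(v',v)]}, and define fˢ in S by fˢ₁ = 1, fˢ_v = Σ_{v' ∈ P(v)} fˢ_{v'} * w(v',v). Then g(fᴳ_v) = fˢ_v for every v ∈ {1,…,N}. -/
theorem apply_biUnion_eq_sum {α ι M : Type*} [AddCommMonoid M] (g : Set α → M)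
    (hg_add : ∀ x y, g (x ∪ y) = g x + g y) (hg_zero : g ∅ = 0)
    (s : Finset ι) (F : ι → Set α) :
    g (⋃ i ∈ s, F i) = ∑ i ∈ s, g (F i) := by
  classical
  induction s using Finset.induction with
  | empty => simpa using hg_zero
  | insert i s hi ih => rw [Finset.set_biUnion_insert, hg_add, ih, Finset.sum_insert hi]

theorem stmt_1_general {S : Type*} [Semiring S]
    (N : ℕ) (P : ℕ → Finset ℕ)
    (hP : ∀ v, v ≤ N → ∀ v' ∈ P v, 1 ≤ v' ∧ v' < v)
    (w : ℕ × ℕ → S)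
    (g : Set (List (ℕ × ℕ)) → S)
    (hg_add : ∀ x y, g (x ∪ y) = g x + g y)
    (hg_mul : ∀ x y, g (crossJoin x y) = g x * g y)
    (hg_zero : g ∅ = 0)
    (hg_one : g {[]} = 1)
    (hg_single : ∀ e : ℕ × ℕ, g {[e]} = w e)
    (fG : ℕ → Set (List (ℕ × ℕ)))
    (hG1 : fG 1 = {[]})
    (hGrec : ∀ v, 2 ≤ v → v ≤ N →
      fG v = ⋃ v' ∈ P v, crossJoin (fG v') {[(v', v)]})
    (fS : ℕ → S)
    (hS1 : fS 1 = 1)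
    (hSrec : ∀ v, 2 ≤ v → v ≤ N →
      fS v = ∑ v' ∈ P v, fS v' * w (v', v)) :
    ∀ v, 1 ≤ v → v ≤ N → g (fG v) = fS v := by
  intro v
  induction v using Nat.strong_induction_on with
  | _ v ih =>
    intro hv1 hvN
    obtain rfl | hv2 := eq_or_lt_of_le hv1
    · rw [hG1, hS1, hg_one]
    rw [hGrec v hv2 hvN, hSrec v hv2 hvN, apply_biUnion_eq_sum g hg_add hg_zero]
    refine Finset.sum_congr rfl fun v' hv' => ?_
    obtain ⟨hv'1, hv'v⟩ := hP v hvN v' hv'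
    rw [hg_mul, hg_single, ih v' hv'v hv'1 (hv'v.le.trans hvN)]

/-- DP semiring fusion, DAG instance: a semiring homomorphism `g` from the language
semiring over edges to `S`, with `g {[e]} = w e`, maps the generator DP recurrence `fG`
to the `S`-valued DP recurrence `fS`. -/
theorem stmt_1 {S : Type*} [Semiring S]
    (N : ℕ) (hN : 1 ≤ N) (P : ℕ → Finset ℕ)
    (hP : ∀ v, v ≤ N → ∀ v' ∈ P v, 1 ≤ v' ∧ v' < v)
    (hP1 : P 1 = ∅)
    (w : ℕ × ℕ → S)
    (g : Set (List (ℕ × ℕ)) → S)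
    (hg_add : ∀ x y, g (x ∪ y) = g x + g y)
    (hg_mul : ∀ x y, g (crossJoin x y) = g x * g y)
    (hg_zero : g ∅ = 0)
    (hg_one : g {[]} = 1)
    (hg_single : ∀ e : ℕ × ℕ, g {[e]} = w e)
    (fG : ℕ → Set (List (ℕ × ℕ)))
    (hG1 : fG 1 = {[]})
    (hGrec : ∀ v, 2 ≤ v → v ≤ N →
      fG v = ⋃ v' ∈ P v, crossJoin (fG v') {[(v', v)]})
    (fS : ℕ → S)
    (hS1 : fS 1 = 1)
    (hSrec : ∀ v, 2 ≤ v → v ≤ N →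
      fS v = ∑ v' ∈ P v, fS v' * w (v', v)) :
    ∀ v, 1 ≤ v → v ≤ N → g (fG v) = fS v :=
  stmt_1_general N P hP w g hg_add hg_mul hg_zero hg_one hg_single fG hG1 hGrec fS hS1 hSrec
end

section
/- (DP semiring constrained fusion, DAG instance.) Let S be a semiring, M a monoid, w : E → S an edge-value map and μ : E → M a constraint map. Define F with values in the monoid algebra MonoidAlgebra S M by F₁ = single(1, 1) and F_v = Σ_{v' ∈ P(v)} F_{v'} * single(μ(v',v), w(v',v)). Then for every v ∈ {1,…,N} and every m ∈ M, F_v(m) equals the sum, over all paths p = [e₁,…,e_k] to v whose constraint value μ(e₁)·μ(e₂)·⋯·μ(e_k) equals m, of the ordered products w(e₁)·w(e₂)·⋯·w(e_k). Consequently, for any decidable predicate a : M → Prop, Σ_{m ∈ support(F_v), a(m)} F_v(m) equals the sum over all paths p to v with a(μ(e₁)⋯μ(e_k)) of the ordered products w(e₁)⋯w(e_k). -/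
/-!
Unfolding the recurrence, `F v` is the generating function `∑ₚ single (μ p) (w p)` of the paths
`p` to `v`: the paths to `v ≠ 1` are the disjoint union, over the parents `v'`, of the paths to
`v'` extended by the edge `(v', v)`, and appending that edge multiplies the generating function
by `single (μ (v', v)) (w (v', v))`, since `single` is multiplicative. The coefficients of such a
sum of singles are read off fibrewise.
-/

open Finset

namespace Finsupp

variable {ι α S : Type*} [AddCommMonoid S]

theorem sum_filter_support_finsetSum_single (s : Finset ι) (f : ι → α) (g : ι → S)
    (a : α → Prop) [DecidablePred a] :
    ∑ m ∈ (∑ i ∈ s, single (f i) (g i)).support.filter a, (∑ i ∈ s, single (f i) (g i)) m =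
      ∑ i ∈ s.filter (fun i => a (f i)), g i := by
  rw [sum_filter, sum_filter]
  calc _ = (∑ i ∈ s, single (f i) (g i)).sum fun m r => if a m then r else 0 := rfl
    _ = ∑ i ∈ s, (single (f i) (g i)).sum fun m r => if a m then r else 0 :=
      (sum_finsetSum_index (h := fun m r => if a m then r else 0)
        (fun _ => ite_self (0 : S)) fun _ _ _ => ite_add_zero).symm
    _ = _ := Finset.sum_congr rfl fun i _ => sum_single_index (ite_self 0)

end Finsupp

theorem Finset.pairwiseDisjoint_image_append_singleton {ι E : Type*} [DecidableEq E]
    (s : Set ι) (t : ι → Finset (List E)) {e : ι → E} (he : Function.Injective e) :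
    s.PairwiseDisjoint fun i => (t i).image (· ++ [e i]) := by
  intro i _ j _ hij
  refine disjoint_left.mpr ?_
  simp only [mem_image]
  rintro _ ⟨l, -, rfl⟩ ⟨l', -, hl⟩
  exact hij (he (List.singleton_injective (List.append_inj' hl rfl).2).symm)

namespace IsPathTo

variable {P : ℕ → Finset ℕ}

theorem one_iff (hP1 : P 1 = ∅) {l : List (ℕ × ℕ)} : IsPathTo P 1 l ↔ l = [] := by
  refine ⟨fun h => ?_, fun h => h ▸ nil⟩
  cases h with
  | nil => rfl
  | cons _ hv' => simp [hP1] at hv'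

theorem iff_of_ne_one {v : ℕ} (hv : v ≠ 1) {l : List (ℕ × ℕ)} :
    IsPathTo P v l ↔ ∃ v' ∈ P v, ∃ l', IsPathTo P v' l' ∧ l' ++ [(v', v)] = l := by
  constructor
  · rintro (_ | ⟨hl', hv'⟩)
    · exact absurd rfl hv
    · exact ⟨_, hv', _, hl', rfl⟩
  · rintro ⟨v', hv', l', hl', rfl⟩
    exact cons hl' hv'

end IsPathTo

section PathPoly

variable {E S M : Type*} [Semiring S] [Monoid M]

noncomputable def pathPoly (w : E → S) (μ : E → M) (s : Finset (List E)) : MonoidAlgebra S M :=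
  ∑ p ∈ s, MonoidAlgebra.single (p.map μ).prod (p.map w).prod

variable (w : E → S) (μ : E → M)

@[simp]
theorem pathPoly_singleton_nil : pathPoly w μ {[]} = MonoidAlgebra.single 1 1 := by
  simp [pathPoly]

theorem pathPoly_image_append_singleton [DecidableEq E] (s : Finset (List E)) (e : E) :
    pathPoly w μ (s.image (· ++ [e])) = pathPoly w μ s * MonoidAlgebra.single (μ e) (w e) := by
  rw [pathPoly, pathPoly, sum_image fun _ _ _ _ => List.append_cancel_right, sum_mul]
  simp

theorem coeff_pathPoly [DecidableEq M] (s : Finset (List E)) (m : M) :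
    (pathPoly w μ s).coeff m = ∑ p ∈ s.filter (fun p => (p.map μ).prod = m), (p.map w).prod := by
  simp [pathPoly, Finsupp.finsetSum_apply, Finsupp.single_apply, sum_filter, eq_comm]

theorem sum_coeff_pathPoly_filter (s : Finset (List E)) (a : M → Prop) [DecidablePred a] :
    ∑ m ∈ (pathPoly w μ s).coeff.support.filter a, (pathPoly w μ s).coeff m =
      ∑ p ∈ s.filter (fun p => a ((p.map μ).prod)), (p.map w).prod := by
  simp only [pathPoly, MonoidAlgebra.coeff_sum, MonoidAlgebra.coeff_single]
  exact Finsupp.sum_filter_support_finsetSum_single ..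

end PathPoly

section Paths

variable {P : ℕ → Finset ℕ} {Paths : ℕ → Finset (List (ℕ × ℕ))}

theorem paths_one_eq (hPaths : ∀ v l, l ∈ Paths v ↔ IsPathTo P v l) (hP1 : P 1 = ∅) :
    Paths 1 = {[]} := by
  ext l
  rw [hPaths, IsPathTo.one_iff hP1, mem_singleton]

theorem paths_eq_biUnion_image (hPaths : ∀ v l, l ∈ Paths v ↔ IsPathTo P v l) {v : ℕ}
    (hv : v ≠ 1) : Paths v = (P v).biUnion fun v' => (Paths v').image (· ++ [(v', v)]) := by
  ext l
  simp only [mem_biUnion, mem_image, hPaths, IsPathTo.iff_of_ne_one hv]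

theorem eq_pathPoly_of_recurrence {S M : Type*} [Semiring S] [Monoid M] {N : ℕ}
    (hP : ∀ v, v ≤ N → ∀ v' ∈ P v, 1 ≤ v' ∧ v' < v) (hP1 : P 1 = ∅)
    (hPaths : ∀ v l, l ∈ Paths v ↔ IsPathTo P v l) {w : ℕ × ℕ → S} {μ : ℕ × ℕ → M}
    {F : ℕ → MonoidAlgebra S M} (hF1 : F 1 = MonoidAlgebra.single 1 1)
    (hFrec : ∀ v, 2 ≤ v → v ≤ N →
      F v = ∑ v' ∈ P v, F v' * MonoidAlgebra.single (μ (v', v)) (w (v', v)))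
    (v : ℕ) (hv1 : 1 ≤ v) (hvN : v ≤ N) : F v = pathPoly w μ (Paths v) := by
  induction v using Nat.strong_induction_on with
  | _ v ih =>
    obtain rfl | hv2 := hv1.eq_or_lt
    · rw [hF1, paths_one_eq hPaths hP1, pathPoly_singleton_nil]
    · rw [hFrec v hv2 hvN, paths_eq_biUnion_image hPaths hv2.ne', pathPoly,
        sum_biUnion (pairwiseDisjoint_image_append_singleton _ _ (Prod.mk_left_injective v))]
      refine sum_congr rfl fun v' hv' => ?_
      obtain ⟨hv'1, hv'v⟩ := hP v hvN v' hv'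
      rw [ih v' hv'v hv'1 (hv'v.le.trans hvN), ← pathPoly_image_append_singleton]
      rfl

end Paths

theorem stmt_2_general {S : Type*} [Semiring S] {M : Type*} [Monoid M] [DecidableEq M]
    (N : ℕ) (P : ℕ → Finset ℕ)
    (hP : ∀ v, v ≤ N → ∀ v' ∈ P v, 1 ≤ v' ∧ v' < v)
    (hP1 : P 1 = ∅)
    (Paths : ℕ → Finset (List (ℕ × ℕ)))
    (hPaths : ∀ v l, l ∈ Paths v ↔ IsPathTo P v l)
    (w : ℕ × ℕ → S) (μ : ℕ × ℕ → M)
    (F : ℕ → MonoidAlgebra S M)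
    (hF1 : F 1 = MonoidAlgebra.single 1 1)
    (hFrec : ∀ v, 2 ≤ v → v ≤ N →
      F v = ∑ v' ∈ P v, F v' * MonoidAlgebra.single (μ (v', v)) (w (v', v))) :
    ∀ v, 1 ≤ v → v ≤ N →
      (∀ m : M, (F v).coeff m =
        ∑ p ∈ (Paths v).filter (fun p => (p.map μ).prod = m), (p.map w).prod) ∧
      (∀ (a : M → Prop) [DecidablePred a],
        ∑ m ∈ (F v).coeff.support.filter a, (F v).coeff m =
          ∑ p ∈ (Paths v).filter (fun p => a ((p.map μ).prod)), (p.map w).prod) := by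
  intro v hv1 hvN
  rw [eq_pathPoly_of_recurrence hP hP1 hPaths hF1 hFrec v hv1 hvN]
  exact ⟨coeff_pathPoly w μ _, fun a _ => sum_coeff_pathPoly_filter w μ _ a⟩

/-- DP semiring constrained fusion, DAG instance: the `MonoidAlgebra`-valued
(constraint-lifted) DP recurrence computes, at each `m : M`, the sum over all paths with
constraint value `m` of the ordered products of their edge weights; projecting by an
acceptance predicate `a` gives the sum over all paths whose constraint value satisfies `a`. -/
theorem stmt_2 {S : Type*} [Semiring S] {M : Type*} [Monoid M] [DecidableEq M]
    (N : ℕ) (hN : 1 ≤ N) (P : ℕ → Finset ℕ)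
    (hP : ∀ v, v ≤ N → ∀ v' ∈ P v, 1 ≤ v' ∧ v' < v)
    (hP1 : P 1 = ∅)
    (Paths : ℕ → Finset (List (ℕ × ℕ)))
    (hPaths : ∀ v l, l ∈ Paths v ↔ IsPathTo P v l)
    (w : ℕ × ℕ → S) (μ : ℕ × ℕ → M)
    (F : ℕ → MonoidAlgebra S M)
    (hF1 : F 1 = MonoidAlgebra.single 1 1)
    (hFrec : ∀ v, 2 ≤ v → v ≤ N →
      F v = ∑ v' ∈ P v, F v' * MonoidAlgebra.single (μ (v', v)) (w (v', v))) :
    ∀ v, 1 ≤ v → v ≤ N →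
      (∀ m : M, (F v).coeff m =
        ∑ p ∈ (Paths v).filter (fun p => (p.map μ).prod = m), (p.map w).prod) ∧
      (∀ (a : M → Prop) [DecidablePred a],
        ∑ m ∈ (F v).coeff.support.filter a, (F v).coeff m =
          ∑ p ∈ (Paths v).filter (fun p => a ((p.map μ).prod)), (p.map w).prod) :=
  stmt_2_general N P hP hP1 Paths hPaths w μ F hF1 hFrec
end

section
/- (Filter–homomorphism fusion laws.) Let S be a semiring whose addition is idempotent (s + s = s for all s), M a monoid, μ : E → M and w : E → S. For a finite set x of lists over E define G(x) ∈ MonoidAlgebra S M by G(x)(m) = Σ_{ℓ ∈ x, μ*(ℓ) = m} w*(ℓ), where μ*(ℓ) is the ordered product in M of μ applied to the entries of ℓ and w*(ℓ) is the ordered product in S of w applied to the entries of ℓ. Then: (i) G(x ∪ y) = G(x) + G(y); (ii) G(x ∘ y) = G(x) * G(y), where x ∘ y = { ℓ ++ ℓ' : ℓ ∈ x, ℓ' ∈ y } and * is the convolution product of MonoidAlgebra S M; (iii) G(∅) = 0; (iv) G({[]}) = single(1, 1); (v) G({[e]}) = single(μ(e), w(e)) for every e ∈ E. -/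
/-!
`G x` is the sum over `ℓ ∈ x` of the monomials `single (μ*ℓ) (w*ℓ)`. Union of languages becomes
addition once a word lying in both `x` and `y` is counted only once, which is exactly what
idempotence of `+` provides. Cross-join becomes convolution because `μ*` and `w*` turn `++` into
products, so the product of the monomials of `ℓ` and `ℓ'` is the monomial of `ℓ ++ ℓ'`; a word
arising from several pairs `(ℓ, ℓ')` is again counted once by idempotence.
-/

section AddIdempotent

variable {A : Type*} [AddCommMonoid A]

theorem nsmul_eq_self_of_add_idem (hidem : ∀ a : A, a + a = a) {n : ℕ} (hn : n ≠ 0) (a : A) :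
    n • a = a := by
  induction n with
  | zero => exact absurd rfl hn
  | succ n ih =>
    rcases eq_or_ne n 0 with rfl | hn'
    · exact one_nsmul a
    · rw [succ_nsmul, ih hn', hidem]

namespace Finset

variable {ι κ : Type*}

theorem sum_add_sum_of_subset_of_add_idem (hidem : ∀ a : A, a + a = a) {s t : Finset ι}
    (h : t ⊆ s) (f : ι → A) : ∑ i ∈ s, f i + ∑ i ∈ t, f i = ∑ i ∈ s, f i := by
  classical
  rw [← sum_sdiff h, add_assoc, hidem]

theorem sum_union_of_add_idem [DecidableEq ι] (hidem : ∀ a : A, a + a = a) (s t : Finset ι)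
    (f : ι → A) : ∑ i ∈ s ∪ t, f i = ∑ i ∈ s, f i + ∑ i ∈ t, f i := by
  rw [← sum_union_inter,
    sum_add_sum_of_subset_of_add_idem hidem inter_subset_union]

theorem sum_image_of_add_idem [DecidableEq κ] (hidem : ∀ a : A, a + a = a) (s : Finset ι)
    (g : ι → κ) (f : κ → A) : ∑ k ∈ s.image g, f k = ∑ i ∈ s, f (g i) := by
  refine sum_image' _ fun i hi => ?_
  rw [sum_congr rfl fun j hj => congrArg f (mem_filter.mp hj).2, sum_const,
    nsmul_eq_self_of_add_idem hidem]
  exact card_ne_zero.mpr ⟨i, mem_filter.mpr ⟨hi, rfl⟩⟩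

end Finset

end AddIdempotent

section LanguageSeries

open MonoidAlgebra

variable {E S M : Type*} [Semiring S] [Monoid M] (μ : E → M) (w : E → S)

/-- The function `G` of the statement, written as a sum of monomials. -/
noncomputable def languageSeries (x : Finset (List E)) : MonoidAlgebra S M :=
  ∑ l ∈ x, single (l.map μ).prod (l.map w).prod

theorem coeff_languageSeries [DecidableEq M] (x : Finset (List E)) (m : M) :
    (languageSeries μ w x).coeff m =
      ∑ l ∈ x.filter (fun l => (l.map μ).prod = m), (l.map w).prod := by
  rw [languageSeries, coeff_sum, Finset.sum_apply', Finset.sum_filter]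
  exact Finset.sum_congr rfl fun l _ => by rw [coeff_single, Finsupp.single_apply]

theorem languageSeries_empty : languageSeries μ w (∅ : Finset (List E)) = 0 :=
  Finset.sum_empty

theorem languageSeries_singleton (l : List E) :
    languageSeries μ w {l} = single (l.map μ).prod (l.map w).prod :=
  Finset.sum_singleton _ _

theorem add_self_of_add_idem (hidem : ∀ s : S, s + s = s) (f : MonoidAlgebra S M) :
    f + f = f := by
  ext m
  exact hidem (f.coeff m)

variable [DecidableEq E]

theorem languageSeries_union (hidem : ∀ s : S, s + s = s) (x y : Finset (List E)) :
    languageSeries μ w (x ∪ y) = languageSeries μ w x + languageSeries μ w y :=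
  Finset.sum_union_of_add_idem (add_self_of_add_idem hidem) x y _

theorem languageSeries_image₂_append (hidem : ∀ s : S, s + s = s) (x y : Finset (List E)) :
    languageSeries μ w (Finset.image₂ (· ++ ·) x y) =
      languageSeries μ w x * languageSeries μ w y := by
  rw [languageSeries, Finset.image₂, Finset.sum_image_of_add_idem (add_self_of_add_idem hidem),
    Finset.sum_product, languageSeries, languageSeries, Finset.sum_mul_sum]
  refine Finset.sum_congr rfl fun l _ => Finset.sum_congr rfl fun l' _ => ?_
  simp only [Function.uncurry_apply_pair, List.map_append, List.prod_append, single_mul_single]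

end LanguageSeries

/-- Filter–homomorphism fusion laws: for an add-idempotent semiring `S`, the lifted
evaluation `G` of a finite language (with `G x m = Σ_{ℓ ∈ x, μ*(ℓ) = m} w*(ℓ)`) is a
semiring homomorphism from finite languages (union / cross-join) to `MonoidAlgebra S M`,
sending singleton one-letter words to `single (μ e) (w e)`. -/
theorem stmt_3 {E : Type*} [DecidableEq E] {S : Type*} [Semiring S]
    (hidem : ∀ s : S, s + s = s)
    {M : Type*} [Monoid M] [DecidableEq M]
    (μ : E → M) (w : E → S)
    (G : Finset (List E) → MonoidAlgebra S M)
    (hG : ∀ (x : Finset (List E)) (m : M),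
      (G x).coeff m = ∑ l ∈ x.filter (fun l => (l.map μ).prod = m), (l.map w).prod) :
    (∀ x y : Finset (List E), G (x ∪ y) = G x + G y) ∧
    (∀ x y : Finset (List E), G (Finset.image₂ (· ++ ·) x y) = G x * G y) ∧
    (G ∅ = 0) ∧
    (G {([] : List E)} = MonoidAlgebra.single 1 1) ∧
    (∀ e : E, G {[e]} = MonoidAlgebra.single (μ e) (w e)) := by
  obtain rfl : G = languageSeries μ w :=
    funext fun x => by ext m; rw [hG, coeff_languageSeries]
  refine ⟨languageSeries_union μ w hidem, languageSeries_image₂_append μ w hidem,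
    languageSeries_empty μ w, ?_, fun e => ?_⟩ <;> simp [languageSeries_singleton]
end

section
/- (Correctness of the minimum-segment-length-constrained segmentation DP.) Let S be a semiring, w : ℕ × ℕ → S, and N ≥ 1. Define f : {0,…,N} × {1,…,N} → S by f(0,m) = 1 if m = N and 0 otherwise, and for j ≥ 1: f(j,m) = Σ_{i=1}^{j} t(i,j,m) where, writing len = j − i + 1, t(i,j,m) = f(i−1,m)·w(i,j) if m < len, t(i,j,m) = (Σ_{m'=m}^{N} f(i−1,m'))·w(i,j) if m = len, and t(i,j,m) = 0 if m > len. Then for every L with 1 ≤ L ≤ N, f(N, L) = Σ over all segmentations 0 = k₀ < k₁ < ⋯ < k_L' = N (L' ≥ 1 arbitrary) whose minimal segment length min_{l} (k_l − k_{l−1}) equals L, of the ordered products w(k₀+1,k₁)·⋯·w(k_{L'−1}+1,k_{L'}). -/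
/-!
A cut list `0 = k₀ < ⋯ < k_r = j` with `r ≥ 1` arises uniquely by appending `j` to a cut list
ending at some `p < j`, which adds a last segment of length `j - p`. The minimal segment length
thus becomes `min μ (j - p)`, where `μ` is that of the shorter list, and this equals `m` iff
either `μ = m < j - p` or `m = j - p ≤ μ`. These are the two branches of the recurrence at
`i = p + 1`, so by strong induction on `j`, `f j m` is the weighted sum over the cut lists ending
at `j` with minimal segment length `m`.
-/

/-- The ordered product of segment weights of a segmentation given by the list of cut
points `ks = [k₀, k₁, …, k_{L'}]`: `w (k₀+1, k₁) * ⋯ * w (k_{L'−1}+1, k_{L'})`. -/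
def segValue {S : Type*} [Semiring S] (w : ℕ × ℕ → S) (ks : List ℕ) : S :=
  ((ks.zip ks.tail).map (fun p => w (p.1 + 1, p.2))).prod

/-- The (finite) set of segmentations of `{1,…,N}`: strictly increasing lists of cut
points `0 = k₀ < k₁ < ⋯ < k_{L'} = N` with `L' ≥ 1`. -/
def segmentations (N : ℕ) : Finset (List ℕ) :=
  (List.range (N + 1)).sublists.toFinset.filter
    (fun ks => ks.IsChain (· < ·) ∧ ks.head? = some 0 ∧ ks.getLast? = some N ∧ 2 ≤ ks.length)

/-- The minimal segment length of the segmentation with cut points `ks` equals `L`: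
every segment has length `≥ L` and some segment has length exactly `L`. -/
def minSegLenEq (ks : List ℕ) (L : ℕ) : Prop :=
  (∀ p ∈ ks.zip ks.tail, L ≤ p.2 - p.1) ∧ (∃ p ∈ ks.zip ks.tail, p.2 - p.1 = L)

instance (ks : List ℕ) (L : ℕ) : Decidable (minSegLenEq ks L) :=
  inferInstanceAs (Decidable (_ ∧ _))

namespace List

theorem zip_tail_append_singleton {α : Type*} :
    ∀ {l : List α} {a : α}, l.getLast? = some a →
      ∀ b, (l ++ [b]).zip (l ++ [b]).tail = l.zip l.tail ++ [(a, b)]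
  | [x], a, h, b => by simp_all
  | x :: y :: t, a, h, b => by
    rw [getLast?_cons_cons] at h
    simpa using zip_tail_append_singleton h b

theorem IsChain.le_of_getLast?_eq_some {α : Type*} [Preorder α] {l : List α} {a b : α}
    (h : l.IsChain (· < ·)) (hl : l.getLast? = some b) (ha : a ∈ l) : a ≤ b := by
  have := ((isChain_iff_pairwise.1 h).imp le_of_lt).rel_getLast ha
  rwa [getLast_of_getLast?_eq_some hl] at this

end List

def cutLists (j : ℕ) : Finset (List ℕ) :=
  (List.range (j + 1)).sublists.toFinset.filter
    (fun ks => ks.IsChain (· < ·) ∧ ks.head? = some 0 ∧ ks.getLast? = some j)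

theorem mem_cutLists {j : ℕ} {ks : List ℕ} :
    ks ∈ cutLists j ↔ ks.IsChain (· < ·) ∧ ks.head? = some 0 ∧ ks.getLast? = some j := by
  refine ⟨fun h => (Finset.mem_filter.1 h).2, fun h => Finset.mem_filter.2 ⟨?_, h⟩⟩
  obtain ⟨hchain, -, hlast⟩ := h
  have hsorted : ks.Pairwise (· < ·) := List.isChain_iff_pairwise.1 hchain
  rw [List.mem_toFinset, List.mem_sublists]
  have hsub : ks ⊆ List.range (j + 1) := fun x hx =>
    List.mem_range.2 (Nat.lt_succ_of_le (hchain.le_of_getLast?_eq_some hlast hx))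
  exact List.sublist_of_subperm_of_pairwise (List.subperm_of_subset hsorted.nodup hsub)
    hsorted List.pairwise_lt_range

theorem cutLists_zero : cutLists 0 = {[0]} := by
  ext ks
  rw [mem_cutLists, Finset.mem_singleton]
  refine ⟨fun ⟨hchain, hhead, hlast⟩ => ?_, by rintro rfl; simp⟩
  match ks, hchain, hhead, hlast with
  | [x], _, hhead, _ => simp_all
  | x :: y :: t, hchain, hhead, hlast =>
    have hxy := (List.isChain_cons_cons.1 hchain).1
    have hy := hchain.le_of_getLast?_eq_some (a := y) hlast (by simp)
    simp at hhead
    omega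

theorem append_singleton_mem_cutLists {ks : List ℕ} {p j : ℕ} (hks : ks ∈ cutLists p)
    (hpj : p < j) : ks ++ [j] ∈ cutLists j := by
  obtain ⟨hchain, hhead, hlast⟩ := mem_cutLists.1 hks
  have hne : ks ≠ [] := by rintro rfl; simp at hhead
  refine mem_cutLists.2 ⟨List.isChain_append.2 ⟨hchain, List.isChain_singleton _, ?_⟩, ?_, by simp⟩
  · simp [hlast, hpj]
  · rwa [List.head?_append_of_ne_nil _ hne]

theorem sum_cutLists_of_pos {M : Type*} [AddCommMonoid M] {j : ℕ} (hj : 0 < j)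
    (g : List ℕ → M) :
    ∑ ks ∈ cutLists j, g ks = ∑ p ∈ Finset.range j, ∑ ks ∈ cutLists p, g (ks ++ [j]) := by
  rw [Finset.sum_sigma']
  symm
  refine Finset.sum_bij (fun a _ => a.2 ++ [j]) ?_ ?_ ?_ (fun _ _ => rfl)
  · rintro ⟨p, ks⟩ h
    rw [Finset.mem_sigma, Finset.mem_range] at h
    exact append_singleton_mem_cutLists h.2 h.1
  · rintro ⟨p, ks⟩ h ⟨p', ks'⟩ h' heq
    have hks : ks = ks' := List.append_cancel_right heq
    subst hks
    have hp := (mem_cutLists.1 (Finset.mem_sigma.1 h).2).2.2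
    have hp' := (mem_cutLists.1 (Finset.mem_sigma.1 h').2).2.2
    obtain rfl : p = p' := Option.some_inj.1 (hp.symm.trans hp')
    rfl
  · intro ks hks
    obtain ⟨hchain, hhead, hlast⟩ := mem_cutLists.1 hks
    obtain ⟨dl, rfl⟩ := List.getLast?_eq_some_iff.1 hlast
    have hne : dl ≠ [] := by rintro rfl; simp at hhead; omega
    obtain ⟨hdl, -, hlt⟩ := List.isChain_append.1 hchain
    refine ⟨⟨dl.getLast hne, dl⟩, Finset.mem_sigma.2 ⟨?_, mem_cutLists.2 ⟨hdl, ?_, ?_⟩⟩, rfl⟩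
    · simpa [List.getLast?_eq_some_getLast hne] using hlt
    · rwa [List.head?_append_of_ne_nil _ hne] at hhead
    · exact List.getLast?_eq_some_getLast hne

theorem two_le_length_of_mem_cutLists {j : ℕ} {ks : List ℕ} (hj : 0 < j)
    (hks : ks ∈ cutLists j) : 2 ≤ ks.length := by
  obtain ⟨-, hhead, hlast⟩ := mem_cutLists.1 hks
  match ks, hhead, hlast with
  | [x], hhead, hlast => simp_all
  | _ :: _ :: _, _, _ => simp

theorem segmentations_eq_cutLists {N : ℕ} (hN : 0 < N) : segmentations N = cutLists N := by
  ext ks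
  refine ⟨fun h => ?_, fun h => ?_⟩
  · simp only [segmentations, cutLists, Finset.mem_filter] at h ⊢
    exact ⟨h.1, h.2.1, h.2.2.1, h.2.2.2.1⟩
  · have hlen := two_le_length_of_mem_cutLists hN h
    simp only [segmentations, cutLists, Finset.mem_filter] at h ⊢
    exact ⟨h.1, h.2.1, h.2.2.1, h.2.2.2, hlen⟩

def segLengths (ks : List ℕ) : List ℕ :=
  (ks.zip ks.tail).map fun p => p.2 - p.1

/-- The default `N` is the value on the one-point cut list `[0]`, which matches the initial
row `f 0 m = if m = N then 1 else 0` of the dynamic program. -/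
def minSegLen (N : ℕ) (ks : List ℕ) : ℕ :=
  (segLengths ks).foldl min N

section append

variable {ks : List ℕ} {p : ℕ}

theorem segLengths_append_singleton (h : ks.getLast? = some p) (j : ℕ) :
    segLengths (ks ++ [j]) = segLengths ks ++ [j - p] := by
  simp [segLengths, List.zip_tail_append_singleton h]

theorem minSegLen_append_singleton (N : ℕ) (h : ks.getLast? = some p) (j : ℕ) :
    minSegLen N (ks ++ [j]) = min (minSegLen N ks) (j - p) := by
  simp [minSegLen, segLengths_append_singleton h]

theorem segValue_append_singleton {S : Type*} [Semiring S] (w : ℕ × ℕ → S)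
    (h : ks.getLast? = some p) (j : ℕ) :
    segValue w (ks ++ [j]) = segValue w ks * w (p + 1, j) := by
  simp [segValue, List.zip_tail_append_singleton h]

end append

theorem minSegLen_le (N : ℕ) (ks : List ℕ) : minSegLen N ks ≤ N := by
  rw [minSegLen, List.foldl_min]
  exact min_le_left _ _

theorem minSegLenEq_iff {N L : ℕ} {ks : List ℕ} (hN : 0 < N) (hks : ks ∈ cutLists N) :
    minSegLenEq ks L ↔ minSegLen N ks = L := by
  have hne : segLengths ks ≠ [] := by
    match ks, two_le_length_of_mem_cutLists hN hks with
    | _ :: _ :: _, _ => simp [segLengths]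
  have hle : ∀ x ∈ segLengths ks, x ≤ N := by
    simp only [segLengths, List.mem_map]
    rintro _ ⟨q, hq, rfl⟩
    have := (mem_cutLists.1 hks).1.le_of_getLast?_eq_some (mem_cutLists.1 hks).2.2
      (List.mem_of_mem_tail (List.of_mem_zip hq).2)
    omega
  rw [minSegLen, List.foldl_min_eq_min hne,
    min_eq_right (hle _ (List.min_mem hne)), List.min_eq_iff hne, minSegLenEq, and_comm,
    segLengths, List.mem_map, List.forall_mem_map]

section dynamicProgram

variable {S : Type*} [Semiring S] (w : ℕ × ℕ → S) (N : ℕ)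

theorem sum_cutLists_append_filter_minSegLen (p j m : ℕ) :
    ∑ ks ∈ cutLists p, (if minSegLen N (ks ++ [j]) = m then segValue w (ks ++ [j]) else 0) =
      if m < j - p then
        (∑ ks ∈ (cutLists p).filter (fun ks => minSegLen N ks = m), segValue w ks) * w (p + 1, j)
      else if m = j - p then
        (∑ ks ∈ (cutLists p).filter (fun ks => m ≤ minSegLen N ks), segValue w ks) * w (p + 1, j)
      else 0 := by
  calc _ = ∑ ks ∈ cutLists p,
        (if min (minSegLen N ks) (j - p) = m then segValue w ks * w (p + 1, j) else 0) := by
        refine Finset.sum_congr rfl fun ks hks => ?_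
        have hlast := (mem_cutLists.1 hks).2.2
        rw [minSegLen_append_singleton N hlast, segValue_append_singleton w hlast]
    _ = _ := by
        split_ifs with hlt heq
        rotate_left 2
        · exact Finset.sum_eq_zero fun ks _ => if_neg (by omega)
        all_goals
          rw [Finset.sum_filter, Finset.sum_mul]
          refine Finset.sum_congr rfl fun ks _ => ?_
          split_ifs <;> first | rfl | (exfalso; omega) | simp

theorem sum_Icc_sum_filter_minSegLen_eq {M : Type*} [AddCommMonoid M] (s : Finset (List ℕ))
    (g : List ℕ → M) (m : ℕ) :
    ∑ m' ∈ Finset.Icc m N, ∑ ks ∈ s.filter (fun ks => minSegLen N ks = m'), g ks =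
      ∑ ks ∈ s.filter (fun ks => m ≤ minSegLen N ks), g ks := by
  rw [Finset.sum_fiberwise_eq_sum_filter]
  refine Finset.sum_congr (Finset.filter_congr fun ks _ => ?_) fun _ _ => rfl
  simp [minSegLen_le]

theorem eq_sum_cutLists_filter_minSegLen (f : ℕ → ℕ → S)
    (h0 : ∀ m, 1 ≤ m → m ≤ N → f 0 m = if m = N then 1 else 0)
    (hrec : ∀ j m, 1 ≤ j → j ≤ N → 1 ≤ m → m ≤ N →
      f j m = ∑ i ∈ Finset.Icc 1 j,
        (if m < j - i + 1 then f (i - 1) m * w (i, j)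
         else if m = j - i + 1 then (∑ m' ∈ Finset.Icc m N, f (i - 1) m') * w (i, j)
         else 0))
    (j : ℕ) (hj : j ≤ N) (m : ℕ) (hm : 1 ≤ m) (hmN : m ≤ N) :
    f j m = ∑ ks ∈ (cutLists j).filter (fun ks => minSegLen N ks = m), segValue w ks := by
  induction j using Nat.strong_induction_on generalizing m with
  | _ j ih =>
  rcases Nat.eq_zero_or_pos j with rfl | hj0
  · rw [h0 m hm hmN, cutLists_zero, Finset.filter_singleton, show minSegLen N [0] = N from rfl]
    obtain rfl | hne := eq_or_ne m N
    · simp [segValue]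
    · simp [hne, hne.symm]
  have ih' : ∀ p < j, ∀ m', m ≤ m' → m' ≤ N →
      f p m' = ∑ ks ∈ (cutLists p).filter (fun ks => minSegLen N ks = m'), segValue w ks :=
    fun p hp m' hm' hm'N => ih p hp (by omega) m' (by omega) hm'N
  rw [hrec j m hj0 hj hm hmN, Finset.sum_filter, sum_cutLists_of_pos hj0,
    ← Finset.Ico_add_one_right_eq_Icc, Finset.sum_Ico_eq_sum_range, Nat.add_sub_cancel]
  refine Finset.sum_congr rfl fun p hp => ?_
  rw [Finset.mem_range] at hp
  rw [sum_cutLists_append_filter_minSegLen, show j - (1 + p) + 1 = j - p by omega,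
    Nat.add_sub_cancel_left, add_comm 1 p, ih' p hp m le_rfl hmN,
    Finset.sum_congr rfl fun m' hm' => ih' p hp m' (Finset.mem_Icc.1 hm').1
      (Finset.mem_Icc.1 hm').2, sum_Icc_sum_filter_minSegLen_eq]

end dynamicProgram

/-- Correctness of the minimum-segment-length-constrained segmentation DP: `f N L` is the
sum, over all segmentations `0 = k₀ < k₁ < ⋯ < k_{L'} = N` whose minimal segment length
`min_l (k_l − k_{l−1})` equals `L`, of the ordered products of segment weights. -/
theorem stmt_11 {S : Type*} [Semiring S] (w : ℕ × ℕ → S) (N : ℕ) (hN : 1 ≤ N)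
    (f : ℕ → ℕ → S)
    (h0 : ∀ m, 1 ≤ m → m ≤ N → f 0 m = if m = N then 1 else 0)
    (hrec : ∀ j m, 1 ≤ j → j ≤ N → 1 ≤ m → m ≤ N →
      f j m = ∑ i ∈ Finset.Icc 1 j,
        (if m < j - i + 1 then f (i - 1) m * w (i, j)
         else if m = j - i + 1 then (∑ m' ∈ Finset.Icc m N, f (i - 1) m') * w (i, j)
         else 0)) :
    ∀ L, 1 ≤ L → L ≤ N →
      f N L = ∑ ks ∈ (segmentations N).filter (fun ks => minSegLenEq ks L),
        segValue w ks := by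
  intro L hL hLN
  rw [eq_sum_cutLists_filter_minSegLen w N f h0 hrec N le_rfl L hL hLN,
    segmentations_eq_cutLists hN]
  exact Finset.sum_congr (Finset.filter_congr fun ks hks => (minSegLenEq_iff hN hks).symm)
    fun _ _ => rfl
end

section
/- (Correctness of the derived longest increasing sub-sequence DP.) Let α be a linear order, N ≥ 1 and u : {1,…,N} → α. Define g : {0,…,N} × {1,…,N} → ℕ by g(0,m) = 1; for n ≥ 1: g(n,n) = max( g(n−1,n), 1 + max_{m' < n, u(m') < u(n)} g(n−1,m') ) where the inner maximum over an empty index set is taken to be 0, and g(n,m) = g(n−1,m) for m ≠ n. Then max_{1 ≤ m ≤ N} g(N,m) equals the length of the longest strictly increasing sub-sequence of u, i.e. the largest k for which there exist indices i₁ < i₂ < ⋯ < i_k in {1,…,N} with u(i₁) < u(i₂) < ⋯ < u(i_k). -/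
/-!
Column `m` of the table is `1` up to row `m - 1` and frozen from row `m` on, so the diagonal
`d m = g m m` satisfies `d m = 1 + max {d m' | m' < m, u m' < u m}`. This is the recursion for the
length of the longest strictly increasing sub-sequence ending at `m`: every such sub-sequence of
length at least two is one ending at an admissible `m'`, followed by `m`. The last row holds
`d 1, …, d N`, and maximising over the end point gives the longest one overall.
-/

open Finset

section LongestIncreasingSubseq

variable {α : Type*} [LinearOrder α]

def IsIncreasingSubseq (u : ℕ → α) (N : ℕ) (l : List ℕ) : Prop :=
  l.IsChain (· < ·) ∧ (∀ i ∈ l, i ∈ Icc 1 N) ∧ l.IsChain (fun a b => u a < u b)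

def lisPredecessors (u : ℕ → α) (m : ℕ) : Finset ℕ :=
  (Icc 1 (m - 1)).filter (fun m' => u m' < u m)

section Subsequences

variable {u : ℕ → α} {N : ℕ}

theorem mem_lisPredecessors {m m' : ℕ} :
    m' ∈ lisPredecessors u m ↔ 1 ≤ m' ∧ m' < m ∧ u m' < u m := by
  simp only [lisPredecessors, mem_filter, mem_Icc]
  grind

theorem isIncreasingSubseq_singleton {m : ℕ} (hm : m ∈ Icc 1 N) :
    IsIncreasingSubseq u N [m] :=
  ⟨.singleton m, by simpa using hm, .singleton m⟩

theorem isIncreasingSubseq_append_singleton {l : List ℕ} {m : ℕ} :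
    IsIncreasingSubseq u N (l ++ [m]) ↔
      IsIncreasingSubseq u N l ∧ m ∈ Icc 1 N ∧ ∀ x ∈ l.getLast?, x < m ∧ u x < u m := by
  simp only [IsIncreasingSubseq, List.isChain_append, List.mem_append, List.mem_singleton,
    List.head?_cons, Option.mem_def, Option.some.injEq, forall_eq']
  grind

variable {d : ℕ → ℕ}

theorem length_le_of_isIncreasingSubseq
    (hd : ∀ m ∈ Icc 1 N, d m = 1 + (lisPredecessors u m).sup d)
    {l : List ℕ} (hl : IsIncreasingSubseq u N l) {m : ℕ} (hlast : l.getLast? = some m) :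
    l.length ≤ d m := by
  induction l using List.reverseRecOn generalizing m with
  | nil => simp at hlast
  | append_singleton l x ih =>
    obtain rfl : m = x := by simpa using hlast.symm
    obtain ⟨hl, hm, hlt⟩ := isIncreasingSubseq_append_singleton.1 hl
    rw [hd m hm, List.length_append, List.length_singleton, add_comm]
    gcongr
    cases hlast' : l.getLast? with
    | none => simp [List.getLast?_eq_none_iff.1 hlast']
    | some m' =>
      obtain ⟨hm'm, hum'⟩ := hlt m' hlast'
      have hm' : 1 ≤ m' := (mem_Icc.1 (hl.2.1 m' (List.mem_of_getLast? hlast'))).1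
      calc l.length ≤ d m' := ih hl hlast'
        _ ≤ (lisPredecessors u m).sup d := le_sup (mem_lisPredecessors.2 ⟨hm', hm'm, hum'⟩)

theorem exists_isIncreasingSubseq_length_eq
    (hd : ∀ m ∈ Icc 1 N, d m = 1 + (lisPredecessors u m).sup d) {m : ℕ} (hm : m ∈ Icc 1 N) :
    ∃ l, IsIncreasingSubseq u N l ∧ l.getLast? = some m ∧ l.length = d m := by
  induction m using Nat.strong_induction_on with
  | _ m ih =>
  rw [hd m hm]
  rcases (lisPredecessors u m).eq_empty_or_nonempty with hempty | hne
  · exact ⟨[m], isIncreasingSubseq_singleton hm, rfl, by simp [hempty]⟩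
  · obtain ⟨m', hm', hsup⟩ := exists_mem_eq_sup _ hne d
    obtain ⟨hm'1, hm'm, hum'⟩ := mem_lisPredecessors.1 hm'
    obtain ⟨l, hl, hlast, hlen⟩ := ih m' hm'm (mem_Icc.2 ⟨hm'1, by grind⟩)
    refine ⟨l ++ [m], isIncreasingSubseq_append_singleton.2 ⟨hl, hm, ?_⟩, by simp, ?_⟩
    · simp [hlast, hm'm, hum']
    · simp [hlen, hsup, add_comm]

end Subsequences

section Table

variable {N : ℕ} {g : ℕ → ℕ → ℕ}

theorem table_eq_one_of_lt (h0 : ∀ m, 1 ≤ m → m ≤ N → g 0 m = 1)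
    (hoff : ∀ n m, 1 ≤ n → n ≤ N → 1 ≤ m → m ≤ N → m ≠ n → g n m = g (n - 1) m)
    {m : ℕ} (hm1 : 1 ≤ m) (hmN : m ≤ N) : ∀ n < m, g n m = 1
  | 0, _ => h0 m hm1 hmN
  | n + 1, hn => by
    rw [hoff (n + 1) m (by omega) (by omega) hm1 hmN (by omega), Nat.add_sub_cancel]
    exact table_eq_one_of_lt h0 hoff hm1 hmN n (by omega)

theorem table_eq_diag_of_le
    (hoff : ∀ n m, 1 ≤ n → n ≤ N → 1 ≤ m → m ≤ N → m ≠ n → g n m = g (n - 1) m)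
    {m n : ℕ} (hm1 : 1 ≤ m) (hmn : m ≤ n) (hnN : n ≤ N) : g n m = g m m := by
  induction n, hmn using Nat.le_induction with
  | base => rfl
  | succ n hmn ih =>
    rw [hoff (n + 1) m (by omega) hnN hm1 (by omega) (by omega), Nat.add_sub_cancel]
    exact ih (by omega)

theorem diag_eq_one_add_sup {u : ℕ → α} (h0 : ∀ m, 1 ≤ m → m ≤ N → g 0 m = 1)
    (hdiag : ∀ n, 1 ≤ n → n ≤ N →
      g n n = max (g (n - 1) n) (1 + (lisPredecessors u n).sup (fun m' => g (n - 1) m')))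
    (hoff : ∀ n m, 1 ≤ n → n ≤ N → 1 ≤ m → m ≤ N → m ≠ n → g n m = g (n - 1) m)
    {m : ℕ} (hm : m ∈ Icc 1 N) :
    g m m = 1 + (lisPredecessors u m).sup (fun m' => g m' m') := by
  obtain ⟨hm1, hmN⟩ := mem_Icc.1 hm
  have hsup : (lisPredecessors u m).sup (fun m' => g (m - 1) m') =
      (lisPredecessors u m).sup (fun m' => g m' m') := by
    refine sup_congr rfl fun m' hm' => ?_
    obtain ⟨hm'1, hm'm, -⟩ := mem_lisPredecessors.1 hm'
    exact table_eq_diag_of_le hoff hm'1 (by omega) (by omega)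
  rw [hdiag m hm1 hmN, table_eq_one_of_lt h0 hoff hm1 hmN (m - 1) (by omega), hsup]
  exact max_eq_right (Nat.le_add_right 1 _)

end Table

end LongestIncreasingSubseq

/-- Correctness of the derived longest increasing sub-sequence DP:
`max_{1 ≤ m ≤ N} g N m` is the largest `k` for which there exist indices
`i₁ < i₂ < ⋯ < i_k` in `{1,…,N}` with `u i₁ < u i₂ < ⋯ < u i_k` (the length of the
longest strictly increasing sub-sequence of `u`). -/
theorem stmt_17 {α : Type*} [LinearOrder α] (N : ℕ) (hN : 1 ≤ N) (u : ℕ → α)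
    (g : ℕ → ℕ → ℕ)
    (h0 : ∀ m, 1 ≤ m → m ≤ N → g 0 m = 1)
    (hdiag : ∀ n, 1 ≤ n → n ≤ N →
      g n n = max (g (n - 1) n)
        (1 + ((Finset.Icc 1 (n - 1)).filter (fun m' => u m' < u n)).sup
          (fun m' => g (n - 1) m')))
    (hoff : ∀ n m, 1 ≤ n → n ≤ N → 1 ≤ m → m ≤ N → m ≠ n → g n m = g (n - 1) m) :
    IsGreatest
      {k : ℕ | ∃ l : List ℕ, l ≠ [] ∧ l.length = k ∧ l.Chain' (· < ·) ∧
        (∀ i ∈ l, i ∈ Finset.Icc 1 N) ∧ l.Chain' (fun a b => u a < u b)}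
      ((Finset.Icc 1 N).sup' (Finset.nonempty_Icc.mpr hN) (g N)) := by
  have hrec : ∀ m ∈ Icc 1 N, g m m = 1 + (lisPredecessors u m).sup (fun m' => g m' m') :=
    fun m hm => diag_eq_one_add_sup h0 hdiag hoff hm
  have hlast_row : ∀ m ∈ Icc 1 N, g N m = g m m := fun m hm =>
    table_eq_diag_of_le hoff (mem_Icc.1 hm).1 (mem_Icc.1 hm).2 le_rfl
  refine ⟨?_, ?_⟩
  · obtain ⟨m, hm, hmax⟩ := exists_mem_eq_sup' (nonempty_Icc.mpr hN) (g N)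
    obtain ⟨l, hl, hlast, hlen⟩ := exists_isIncreasingSubseq_length_eq hrec hm
    exact ⟨l, by rintro rfl; simp at hlast, by rw [hlen, hmax, hlast_row m hm], hl⟩
  · rintro k ⟨l, hne, rfl, hl⟩
    have hm := hl.2.1 _ (List.getLast_mem hne)
    calc l.length ≤ g _ _ :=
          length_le_of_isIncreasingSubseq hrec hl (List.getLast?_eq_some_getLast hne)
      _ = g N _ := (hlast_row _ hm).symm
      _ ≤ _ := le_sup' (g N) hm
end

section
/- (The arg-max-plus / Viterbi tupled structure is a semiring.) Let E be a type and let C be the set of pairs (c, x) with c ∈ ℝ ∪ {−∞} and x a set of lists over E, subject to the condition that c = −∞ implies x = ∅. Equip C with addition (c,x) ⊕ (d,y) = (c,x) if c > d, (d,y) if c < d, and (c, x ∪ y) if c = d; and multiplication (c,x) ⊗ (d,y) = (c + d, x ∘ y), where −∞ + r = r + (−∞) = −∞ and x ∘ y = { ℓ ++ ℓ' : ℓ ∈ x, ℓ' ∈ y }. Then C is closed under ⊕ and ⊗ and (C, ⊕, ⊗, (−∞, ∅), (0, {[]})) is a semiring: ⊕ is associative and commutative with identity (−∞, ∅), ⊗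 is associative with identity (0, {[]}), (−∞, ∅) is absorbing for ⊗, and ⊗ distributes over ⊕ on both sides. -/
/-!
Multiplying by a fixed element of finite score acts on scores by a strictly monotone translation
and on languages by the union-preserving map `image2 (· ++ ·)`; any such pair of maps commutes
with `⊕`, which gives distributivity. A factor of score `−∞` has empty language by
admissibility, and then both sides are `(−∞, ∅)`.
-/

/-- The carrier of the arg-max-plus (Viterbi) tupled structure: pairs of a score in
`ℝ ∪ {−∞}` and a language over `E`. -/
abbrev Viterbi (E : Type*) := WithBot ℝ × Set (List E)

/-- The admissibility condition defining `C`: if the score is `−∞` then the language is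
empty. -/
def Ok {E : Type*} (p : Viterbi E) : Prop := p.1 = ⊥ → p.2 = ∅

open scoped Classical in
/-- `(c,x) ⊕ (d,y) = (c,x)` if `c > d`, `(d,y)` if `c < d`, `(c, x ∪ y)` if `c = d`. -/
noncomputable def vadd {E : Type*} (p q : Viterbi E) : Viterbi E :=
  if p.1 < q.1 then q else if q.1 < p.1 then p else (p.1, p.2 ∪ q.2)

/-- `(c,x) ⊗ (d,y) = (c + d, x ∘ y)`, with `−∞ + r = r + (−∞) = −∞` and
`x ∘ y = { ℓ ++ ℓ' : ℓ ∈ x, ℓ' ∈ y }`. -/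
noncomputable def vmul {E : Type*} (p q : Viterbi E) : Viterbi E :=
  (p.1 + q.1, Set.image2 (· ++ ·) p.2 q.2)

/-- The additive identity `(−∞, ∅)`. -/
def vzero (E : Type*) : Viterbi E := ((⊥ : WithBot ℝ), (∅ : Set (List E)))

/-- The multiplicative identity `(0, {[]})`. -/
def vone (E : Type*) : Viterbi E := ((0 : WithBot ℝ), ({[]} : Set (List E)))

namespace Viterbi

variable {E F : Type*}

lemma ok_vadd {p q : Viterbi E} (hp : Ok p) (hq : Ok q) : Ok (vadd p q) := by
  unfold vadd
  split_ifs with hpq hqp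
  · exact hq
  · exact hp
  · intro h
    have heq : p.1 = q.1 := le_antisymm (not_lt.mp hqp) (not_lt.mp hpq)
    simp [hp h, hq (heq ▸ h)]

lemma ok_vmul {p q : Viterbi E} (hp : Ok p) (hq : Ok q) : Ok (vmul p q) := by
  intro h
  rcases WithBot.add_eq_bot.mp h with h | h
  · simp [vmul, hp h]
  · simp [vmul, hq h]

lemma vadd_comm (p q : Viterbi E) : vadd p q = vadd q p := by
  unfold vadd
  rcases lt_trichotomy p.1 q.1 with h | h | h
  · simp [h, lt_asymm h]
  · simp [h, Set.union_comm]
  · simp [h, lt_asymm h]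

lemma vadd_assoc (p q r : Viterbi E) : vadd (vadd p q) r = vadd p (vadd q r) := by
  unfold vadd
  rcases lt_trichotomy p.1 q.1 with h₁ | h₁ | h₁ <;>
    rcases lt_trichotomy q.1 r.1 with h₂ | h₂ | h₂
  · simp [h₁, h₂, h₁.trans h₂]
  · simp [h₂, h₂ ▸ h₁]
  · simp [h₁, h₂, lt_asymm h₂]
  · simp [h₁, h₂]
  · simp [h₁, h₂, Set.union_assoc]
  · simp [h₁, h₂, lt_asymm h₂]
  · simp [h₁, h₂, lt_asymm h₁]
  · simp [h₂, h₂ ▸ h₁, lt_asymm (h₂ ▸ h₁)]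
  · simp [h₁, h₂, h₂.trans h₁, lt_asymm h₁, lt_asymm h₂, lt_asymm (h₂.trans h₁)]

lemma vadd_vzero (p : Viterbi E) : vadd p (vzero E) = p := by
  unfold vadd vzero
  rcases eq_bot_or_bot_lt p.1 with h | h
  · simp [h, Prod.ext_iff]
  · simp [h, not_lt_bot]

lemma vzero_vadd (p : Viterbi E) : vadd (vzero E) p = p := by
  rw [vadd_comm, vadd_vzero]

lemma vmul_assoc (p q r : Viterbi E) : vmul (vmul p q) r = vmul p (vmul q r) :=
  Prod.ext (add_assoc _ _ _) (Set.image2_assoc List.append_assoc)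

lemma vmul_vone (p : Viterbi E) : vmul p (vone E) = p := by
  simp [vmul, vone]

lemma vone_vmul (p : Viterbi E) : vmul (vone E) p = p := by
  simp [vmul, vone]

lemma vmul_vzero (p : Viterbi E) : vmul p (vzero E) = vzero E := by
  simp [vmul, vzero]

lemma vzero_vmul (p : Viterbi E) : vmul (vzero E) p = vzero E := by
  simp [vmul, vzero]

lemma eq_vzero_of_fst_eq_bot {p : Viterbi E} (hp : Ok p) (h : p.1 = ⊥) : p = vzero E :=
  Prod.ext h (hp h)

lemma map_vadd {g : WithBot ℝ → WithBot ℝ} {h : Set (List E) → Set (List F)}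
    (hg : StrictMono g) (hh : ∀ s t, h (s ∪ t) = h s ∪ h t) (p q : Viterbi E) :
    Prod.map g h (vadd p q) = vadd (Prod.map g h p) (Prod.map g h q) := by
  unfold vadd
  simp only [Prod.map_fst, Prod.map_snd, hg.lt_iff_lt]
  split_ifs <;> simp [hh]

lemma vmul_vadd {p : Viterbi E} (hp : Ok p) (q r : Viterbi E) :
    vmul p (vadd q r) = vadd (vmul p q) (vmul p r) := by
  by_cases hb : p.1 = ⊥
  · simp [eq_vzero_of_fst_eq_bot hp hb, vzero_vmul, vadd_vzero]
  · exact map_vadd (g := (p.1 + ·)) (fun _ _ ↦ WithBot.add_lt_add_left hb)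
      (fun _ _ ↦ Set.image2_union_right) q r

lemma vadd_vmul (p q : Viterbi E) {r : Viterbi E} (hr : Ok r) :
    vmul (vadd p q) r = vadd (vmul p r) (vmul q r) := by
  by_cases hb : r.1 = ⊥
  · simp [eq_vzero_of_fst_eq_bot hr hb, vmul_vzero, vadd_vzero]
  · exact map_vadd (g := (· + r.1)) (h := (Set.image2 (· ++ ·) · r.2))
      (fun _ _ ↦ WithBot.add_lt_add_right hb) (fun _ _ ↦ Set.image2_union_left) p q

end Viterbi

/-- The arg-max-plus / Viterbi tupled structure is a semiring: `C` (the elements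
satisfying `Ok`) is closed under `⊕` and `⊗`; `⊕` is associative and commutative with
identity `(−∞, ∅)`; `⊗` is associative with identity `(0, {[]})`; `(−∞, ∅)` is absorbing
for `⊗`; and `⊗` distributes over `⊕` on both sides. -/
theorem stmt_18 (E : Type*) :
    (∀ p q : Viterbi E, Ok p → Ok q → Ok (vadd p q)) ∧
    (∀ p q : Viterbi E, Ok p → Ok q → Ok (vmul p q)) ∧
    (∀ p q r : Viterbi E, Ok p → Ok q → Ok r →
      vadd (vadd p q) r = vadd p (vadd q r)) ∧
    (∀ p q : Viterbi E, Ok p → Ok q → vadd p q = vadd q p) ∧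
    (∀ p : Viterbi E, Ok p → vadd p (vzero E) = p ∧ vadd (vzero E) p = p) ∧
    (∀ p q r : Viterbi E, Ok p → Ok q → Ok r →
      vmul (vmul p q) r = vmul p (vmul q r)) ∧
    (∀ p : Viterbi E, Ok p → vmul p (vone E) = p ∧ vmul (vone E) p = p) ∧
    (∀ p : Viterbi E, Ok p → vmul p (vzero E) = vzero E ∧ vmul (vzero E) p = vzero E) ∧
    (∀ p q r : Viterbi E, Ok p → Ok q → Ok r →
      vmul p (vadd q r) = vadd (vmul p q) (vmul p r) ∧
      vmul (vadd p q) r = vadd (vmul p r) (vmul q r)) :=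
  ⟨fun _ _ ↦ Viterbi.ok_vadd, fun _ _ ↦ Viterbi.ok_vmul,
    fun p q r _ _ _ ↦ Viterbi.vadd_assoc p q r,
    fun p q _ _ ↦ Viterbi.vadd_comm p q,
    fun p _ ↦ ⟨Viterbi.vadd_vzero p, Viterbi.vzero_vadd p⟩,
    fun p q r _ _ _ ↦ Viterbi.vmul_assoc p q r,
    fun p _ ↦ ⟨Viterbi.vmul_vone p, Viterbi.vone_vmul p⟩,
    fun p _ ↦ ⟨Viterbi.vmul_vzero p, Viterbi.vzero_vmul p⟩,
    fun p q r hp _ hr ↦ ⟨Viterbi.vmul_vadd hp q r, Viterbi.vadd_vmul p q hr⟩⟩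
end
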